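/- For every positive integer m, the product over all primes p of (1 + φ(gcd(m,p))/(p(p-1))) converges and is O(m/φ(m)), hence O(log log (10m)). -/

import Mathlib

open Finset Real Nat

lemma tele_Ico (f : ℕ → ℝ) {m n : ℕ} (h : m ≤ n) :
    ∑ i ∈ Finset.Ico m n, (f (i+1) - f i) = f n - f m := by
  rw [Finset.sum_Ico_eq_sub _ h, Finset.sum_range_sub, Finset.sum_range_sub]
  ring

lemma theta_le (n : ℕ) :
    ∑ p ∈ Nat.primesBelow (n+1), Real.log p ≤ n * Real.log 4 := by
  have h1 : ∑ p ∈ Nat.primesBelow (n+1), Real.log p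
      = Real.log (primorial n) := by
    rw [primorial, Nat.cast_prod, Real.log_prod]
    · rfl
    · intro p hp
      have h2 := (Nat.prime_of_mem_primesBelow (p := p) (n := n+1)
        (by simpa [Nat.primesBelow] using hp)).two_le
      have : (0:ℝ) < p := by exact_mod_cast Nat.lt_of_lt_of_le (by norm_num) h2
      positivity
  rw [h1]
  calc Real.log (primorial n) ≤ Real.log ((4:ℕ)^n) := by
        apply Real.log_le_log (by exact_mod_cast (primorial_pos n))
        exact_mod_cast primorial_le_4_pow n
    _ = n * Real.log 4 := by push_cast [Real.log_pow]; ring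

lemma legendre_lb (n : ℕ) {p : ℕ} (hp : p.Prime) :
    n / p ≤ (Nat.factorial n).factorization p := by
  haveI : Fact p.Prime := ⟨hp⟩
  rw [Nat.factorization_def _ hp]
  rcases lt_or_ge n p with h | h
  · simp [Nat.div_eq_of_lt h]
  · have hn : n ≠ 0 := by
      intro h0; rw [h0] at h; exact absurd (Nat.le_zero.mp h) hp.ne_zero
    have hlog : 1 ≤ Nat.log p n := Nat.log_pos hp.one_lt h
    rw [padicValNat_factorial (Nat.lt_succ_self _)]
    calc n / p = n / p ^ 1 := by norm_num
      _ ≤ ∑ i ∈ Finset.Ico 1 (Nat.log p n + 1), n / p ^ i := by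
          apply Finset.single_le_sum (f := fun i => n / p ^ i)
          · intro i _; exact Nat.zero_le _
          · simp only [Finset.mem_Ico]; exact ⟨le_refl 1, by omega⟩

lemma log_factorial (n : ℕ) :
    Real.log (Nat.factorial n) =
      ∑ p ∈ (Nat.factorial n).primeFactors,
        ((Nat.factorial n).factorization p : ℝ) * Real.log p := by
  conv_lhs => rw [← Nat.factorization_prod_pow_eq_self (Nat.factorial_ne_zero n)]
  rw [Nat.prod_factorization_eq_prod_primeFactors, Nat.cast_prod, Real.log_prod]
  · apply Finset.sum_congr rfl
    intro p hp
    have hp2 := (Nat.prime_of_mem_primeFactors hp).two_le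
    push_cast
    rw [Real.log_pow]
  · intro p hp
    have hp2 := (Nat.prime_of_mem_primeFactors hp).two_le
    have : (0:ℕ) < p ^ (Nat.factorial n).factorization p :=
      Nat.pow_pos (by omega)
    exact_mod_cast this.ne'

/-- Mertens' first theorem (upper bound): ∑_{p ≤ n} log p / p ≤ log n + 2 -/
lemma mertens1 (n : ℕ) (hn : 1 ≤ n) :
    ∑ p ∈ Nat.primesBelow (n+1), Real.log p / p ≤ Real.log n + 2 := by
  have key : (n:ℝ) * ∑ p ∈ Nat.primesBelow (n+1), Real.log p / p
      ≤ Real.log (Nat.factorial n) + n * Real.log 4 := by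
    rw [Finset.mul_sum]
    have h1 : ∀ p ∈ Nat.primesBelow (n+1),
        (n:ℝ) * (Real.log p / p) ≤ ((Nat.factorial n).factorization p : ℝ) * Real.log p
          + Real.log p := by
      intro p hp
      have hpp := Nat.prime_of_mem_primesBelow hp
      have hp0 : (0:ℝ) < p := by exact_mod_cast hpp.pos
      have hlogp : 0 ≤ Real.log p := Real.log_natCast_nonneg p
      have hdiv : (n:ℝ) / p ≤ ((n / p : ℕ) : ℝ) + 1 := by
        have h3 : n < (n / p + 1) * p := by
          rw [← Nat.div_lt_iff_lt_mul hpp.pos]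
          omega
        rw [div_le_iff₀ hp0]
        push_cast
        exact_mod_cast (le_of_lt (by exact_mod_cast h3 : (n:ℝ) < ((n/p:ℕ) + 1) * p))
      have hleg : ((n / p : ℕ) : ℝ) ≤ ((Nat.factorial n).factorization p : ℝ) := by
        exact_mod_cast legendre_lb n hpp
      calc (n:ℝ) * (Real.log p / p) = ((n:ℝ)/p) * Real.log p := by ring
        _ ≤ (((n / p : ℕ) : ℝ) + 1) * Real.log p := by
            apply mul_le_mul_of_nonneg_right hdiv hlogp
        _ ≤ ((Nat.factorial n).factorization p : ℝ) * Real.log p + Real.log p := by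
            nlinarith
    calc ∑ p ∈ Nat.primesBelow (n+1), (n:ℝ) * (Real.log p / p)
        ≤ ∑ p ∈ Nat.primesBelow (n+1),
            (((Nat.factorial n).factorization p : ℝ) * Real.log p + Real.log p) :=
          Finset.sum_le_sum h1
      _ = ∑ p ∈ Nat.primesBelow (n+1), ((Nat.factorial n).factorization p : ℝ) * Real.log p
          + ∑ p ∈ Nat.primesBelow (n+1), Real.log p := Finset.sum_add_distrib
      _ ≤ Real.log (Nat.factorial n) + n * Real.log 4 := by
          apply add_le_add _ (theta_le n)
          rw [log_factorial n]
          apply Finset.sum_le_sum_of_subset_of_nonneg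
          · intro p hp
            have hpp := Nat.prime_of_mem_primesBelow hp
            have hple : p ≤ n := Nat.lt_succ_iff.mp (Nat.lt_of_mem_primesBelow hp)
            exact Nat.mem_primeFactors.mpr ⟨hpp, hpp.dvd_factorial.mpr hple,
              Nat.factorial_ne_zero n⟩
          · intro p _ _
            have : 0 ≤ Real.log p := Real.log_natCast_nonneg p
            positivity
  have hfact : Real.log (Nat.factorial n) ≤ n * Real.log n := by
    calc Real.log (Nat.factorial n) ≤ Real.log ((n:ℕ)^n) := by
          apply Real.log_le_log (by exact_mod_cast Nat.factorial_pos n)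
          exact_mod_cast Nat.factorial_le_pow n
      _ = n * Real.log n := by push_cast [Real.log_pow]; ring
  have hlog4 : Real.log 4 ≤ 2 := by
    rw [show (4:ℝ) = 2^2 by norm_num, Real.log_pow]
    have := Real.log_two_lt_d9
    norm_num; linarith
  have hn0 : (0:ℝ) < n := by exact_mod_cast hn
  have := key.trans (by nlinarith : Real.log (Nat.factorial n) + n * Real.log 4
    ≤ n * (Real.log n + 2))
  calc ∑ p ∈ Nat.primesBelow (n+1), Real.log p / p
      = ((n:ℝ) * ∑ p ∈ Nat.primesBelow (n+1), Real.log p / p) / n := by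
        field_simp
    _ ≤ Real.log n + 2 := by
        rw [div_le_iff₀ hn0]; linarith

lemma per_term {n : ℕ} (hn : 2 ≤ n) :
    (1/Real.log n - 1/Real.log (n+1)) * (Real.log n + 2)
      ≤ (Real.log (Real.log (n+1)) - Real.log (Real.log n))
        + 2 * (1/Real.log n - 1/Real.log (n+1)) := by
  have hn2 : (2:ℝ) ≤ (n:ℝ) := by exact_mod_cast hn
  have hL : 0 < Real.log n := Real.log_pos (by linarith)
  have hL' : 0 < Real.log (n+1) := Real.log_pos (by linarith)
  have hLL : Real.log n ≤ Real.log (n+1) := Real.log_le_log (by linarith) (by linarith)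
  -- core : (1/L - 1/L') * L ≤ ll' - ll
  have hx : (0:ℝ) < Real.log (n+1) / Real.log n := by positivity
  have hcore : 1 - Real.log n / Real.log (n+1)
      ≤ Real.log (Real.log (n+1)) - Real.log (Real.log n) := by
    have h1 : Real.log (Real.log n / Real.log (n+1)) ≤ Real.log n / Real.log (n+1) - 1 :=
      Real.log_le_sub_one_of_pos (by positivity)
    rw [Real.log_div hL.ne' hL'.ne'] at h1
    linarith
  have hexp : (1/Real.log n - 1/Real.log (n+1)) * Real.log n
      = 1 - Real.log n / Real.log (n+1) := by
    field_simp
  nlinarith [hcore, hexp]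

/-- Mertens' second theorem (upper bound) -/
lemma mertens2 (N : ℕ) (hN : 2 ≤ N) :
    ∑ p ∈ Nat.primesBelow (N+1), 1/(p:ℝ) ≤ Real.log (Real.log N) + 10 := by
  set g : ℕ → ℝ := fun n => 1/Real.log n with hg
  set A : ℕ → ℝ := fun n => ∑ p ∈ Nat.primesBelow (n+1), Real.log p / p with hA
  have hN2 : (2:ℝ) ≤ (N:ℝ) := by exact_mod_cast hN
  have hlog2 : (0.6931471803 : ℝ) < Real.log 2 := Real.log_two_gt_d9
  have hlogN : Real.log 2 ≤ Real.log N := Real.log_le_log (by norm_num) hN2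
  -- step 1: rewrite each 1/p
  have step1 : ∑ p ∈ Nat.primesBelow (N+1), 1/(p:ℝ)
      = A N * g N + ∑ p ∈ Nat.primesBelow (N+1),
          (Real.log p / p) * ∑ n ∈ Finset.Ico p N, (g n - g (n+1)) := by
    rw [hA]
    rw [Finset.sum_mul, ← Finset.sum_add_distrib]
    apply Finset.sum_congr rfl
    intro p hp
    have hpp := Nat.prime_of_mem_primesBelow hp
    have hpN : p ≤ N := Nat.lt_succ_iff.mp (Nat.lt_of_mem_primesBelow hp)
    have hp2 : (2:ℝ) ≤ (p:ℝ) := by exact_mod_cast hpp.two_le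
    have hLp : 0 < Real.log p := Real.log_pos (by linarith)
    have htel : ∑ n ∈ Finset.Ico p N, (g n - g (n+1)) = g p - g N := by
      have := tele_Ico (fun n => -g n) hpN
      simp only [neg_sub_neg] at this
      calc ∑ n ∈ Finset.Ico p N, (g n - g (n+1))
          = ∑ n ∈ Finset.Ico p N, ((fun n => -g n) (n+1) - (fun n => -g n) n) := by
            apply Finset.sum_congr rfl; intro x _; simp; ring
        _ = -g N - -g p := tele_Ico (fun n => -g n) hpN
        _ = g p - g N := by ring
    rw [htel]
    have hp0 : (p:ℝ) ≠ 0 := by linarith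
    have hLN : 0 < Real.log N := Real.log_pos (by linarith)
    field_simp [hg]
    ring
    simp only [hg]
    field_simp
  rw [step1]
  -- step 2: swap the double sum
  have step2 : ∑ p ∈ Nat.primesBelow (N+1),
        (Real.log p / p) * ∑ n ∈ Finset.Ico p N, (g n - g (n+1))
      = ∑ n ∈ Finset.Ico 2 N, A n * (g n - g (n+1)) := by
    simp_rw [Finset.mul_sum]
    rw [Finset.sum_comm' (s' := fun n => Nat.primesBelow (n+1)) (t' := Finset.Ico 2 N)]
    · apply Finset.sum_congr rfl
      intro n _
      rw [hA, Finset.sum_mul]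
    · intro p n
      simp only [Nat.mem_primesBelow, Finset.mem_Ico]
      constructor
      · rintro ⟨⟨h1, h2⟩, h3, h4⟩
        have := h2.two_le
        exact ⟨⟨by omega, h2⟩, by omega, h4⟩
      · rintro ⟨⟨h1, h2⟩, h3, h4⟩
        exact ⟨⟨by omega, h2⟩, by omega, h4⟩
  rw [step2]
  -- bounds
  have hgmono : ∀ n : ℕ, 2 ≤ n → 0 ≤ g n - g (n+1) := by
    intro n hn
    have hn2 : (2:ℝ) ≤ (n:ℝ) := by exact_mod_cast hn
    have hL : 0 < Real.log n := Real.log_pos (by linarith)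
    have hL' : 0 < Real.log (n+1) := Real.log_pos (by linarith)
    have : Real.log n ≤ Real.log (n+1) := Real.log_le_log (by linarith) (by linarith)
    simp only [hg, sub_nonneg]
    push_cast
    apply div_le_div_of_nonneg_left (by norm_num) hL this
  have hAle : ∀ n : ℕ, 1 ≤ n → A n ≤ Real.log n + 2 := fun n h => mertens1 n h
  -- term 1
  have hterm1 : A N * g N ≤ 4 := by
    have h1 : A N ≤ Real.log N + 2 := hAle N (by omega)
    have hLN : 0 < Real.log N := Real.log_pos (by linarith)
    have hgN : g N = 1 / Real.log N := rfl
    have h2 : A N * g N ≤ (Real.log N + 2) * (1 / Real.log N) := by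
      apply mul_le_mul_of_nonneg_right h1 (by positivity)
    have h3 : (Real.log N + 2) * (1 / Real.log N) = 1 + 2 / Real.log N := by
      field_simp
    have h4 : 2 / Real.log N ≤ 2 / Real.log 2 := by
      apply div_le_div_of_nonneg_left (by norm_num) (by linarith) hlogN
    have h5 : 2 / Real.log 2 ≤ 3 := by
      rw [div_le_iff₀ (by linarith)]; linarith
    rw [hgN] at h2; linarith
  -- term 2
  have hterm2 : ∑ n ∈ Finset.Ico 2 N, A n * (g n - g (n+1))
      ≤ Real.log (Real.log N) - Real.log (Real.log 2) + 2 * (g 2 - g N) := by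
    have hstep : ∀ n ∈ Finset.Ico 2 N, A n * (g n - g (n+1))
        ≤ ((Real.log (Real.log (n+1)) - Real.log (Real.log n))
            + 2 * (g n - g (n+1))) := by
      intro n hn
      rw [Finset.mem_Ico] at hn
      have h1 : A n ≤ Real.log n + 2 := hAle n (by omega)
      have h2 := hgmono n hn.1
      have h3 := per_term hn.1
      have : A n * (g n - g (n+1)) ≤ (Real.log n + 2) * (g n - g (n+1)) :=
        mul_le_mul_of_nonneg_right h1 h2
      have heq : (g n - g (n+1)) * (Real.log n + 2)
          = (Real.log n + 2) * (g n - g (n+1)) := by ring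
      simp only [hg] at h3 this ⊢
      push_cast at h3 this ⊢
      linarith [h3, this]
    calc ∑ n ∈ Finset.Ico 2 N, A n * (g n - g (n+1))
        ≤ ∑ n ∈ Finset.Ico 2 N, ((Real.log (Real.log (n+1)) - Real.log (Real.log n))
            + 2 * (g n - g (n+1))) := Finset.sum_le_sum hstep
      _ = (Real.log (Real.log N) - Real.log (Real.log 2)) + 2 * (g 2 - g N) := by
          rw [Finset.sum_add_distrib]
          have t1 : ∑ n ∈ Finset.Ico 2 N, (Real.log (Real.log (n+1)) - Real.log (Real.log n))
              = Real.log (Real.log N) - Real.log (Real.log 2) := by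
            have := tele_Ico (fun n => Real.log (Real.log n)) hN
            simpa using this
          have t2 : ∑ n ∈ Finset.Ico 2 N, 2 * (g n - g (n+1)) = 2 * (g 2 - g N) := by
            rw [← Finset.mul_sum]
            congr 1
            have := tele_Ico (fun n => -g n) hN
            calc ∑ n ∈ Finset.Ico 2 N, (g n - g (n+1))
                = ∑ n ∈ Finset.Ico 2 N, ((fun n => -g n) (n+1) - (fun n => -g n) n) := by
                  apply Finset.sum_congr rfl; intro x _; simp; ring
              _ = -g N - -g 2 := tele_Ico (fun n => -g n) hN
              _ = g 2 - g N := by ring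
          rw [t1, t2]
      _ = Real.log (Real.log N) - Real.log (Real.log 2) + 2 * (g 2 - g N) := by ring
  -- numerics
  have hll2 : -1 ≤ Real.log (Real.log 2) := by
    have h1 : Real.log (1 / Real.log 2) ≤ 1 / Real.log 2 - 1 :=
      Real.log_le_sub_one_of_pos (by positivity)
    rw [Real.log_div (by norm_num) (by linarith)] at h1
    simp only [Real.log_one] at h1
    have : 1 / Real.log 2 ≤ 2 := by
      rw [div_le_iff₀ (by linarith)]; linarith
    linarith
  have hg2 : g 2 - g N ≤ 1 / Real.log 2 := by
    have hLN : 0 < Real.log N := Real.log_pos (by linarith)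
    have : 0 ≤ g N := by simp only [hg]; positivity
    have : g 2 = 1 / Real.log 2 := by norm_num [hg]
    linarith
  have h1log2 : 1 / Real.log 2 ≤ 2 := by rw [div_le_iff₀ (by linarith)]; linarith
  linarith [hterm1, hterm2]

/-- sum of 1/(n(n-1)) over any finset of naturals ≥ 2 is at most 1 -/
lemma helperT (s : Finset ℕ) (hs : ∀ n ∈ s, 2 ≤ n) :
    ∑ n ∈ s, 1/((n:ℝ) * ((n:ℝ) - 1)) ≤ 1 := by
  rcases s.eq_empty_or_nonempty with h | h
  · simp [h]
  set B := s.sup id + 1 with hB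
  have hsub : s ⊆ Finset.Ico 2 B := by
    intro n hn
    rw [Finset.mem_Ico]
    exact ⟨hs n hn, by have := Finset.le_sup (f := id) hn; simp only [id] at this; omega⟩
  have hle : ∑ n ∈ s, 1/((n:ℝ) * ((n:ℝ) - 1))
      ≤ ∑ n ∈ Finset.Ico 2 B, 1/((n:ℝ) * ((n:ℝ) - 1)) := by
    apply Finset.sum_le_sum_of_subset_of_nonneg hsub
    intro n hn _
    rw [Finset.mem_Ico] at hn
    have h2 : (2:ℝ) ≤ (n:ℝ) := by exact_mod_cast hn.1
    have h3 : (0:ℝ) < (n:ℝ) - 1 := by linarith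
    positivity
  have hB2 : 2 ≤ B := by
    obtain ⟨x, hx⟩ := h
    have := hs x hx
    have := Finset.le_sup (f := id) hx
    simp only [id] at this
    omega
  have htel : ∑ n ∈ Finset.Ico 2 B, 1/((n:ℝ) * ((n:ℝ) - 1))
      = (fun n : ℕ => -(1/((n:ℝ) - 1))) B - (fun n : ℕ => -(1/((n:ℝ) - 1))) 2 := by
    rw [← tele_Ico (fun n : ℕ => -(1/((n:ℝ) - 1))) hB2]
    apply Finset.sum_congr rfl
    intro n hn
    rw [Finset.mem_Ico] at hn
    have h2 : (2:ℝ) ≤ (n:ℝ) := by exact_mod_cast hn.1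
    have h3 : (n:ℝ) ≠ 0 := by linarith
    have h4 : (n:ℝ) - 1 ≠ 0 := by linarith
    push_cast
    rw [add_sub_cancel_right]
    field_simp
    ring
  rw [htel] at hle
  simp only at hle
  have hB2' : (2:ℝ) ≤ (B:ℝ) := by exact_mod_cast hB2
  have h5 : 0 < (B:ℝ) - 1 := by linarith
  have h6 : 0 ≤ 1/((B:ℝ) - 1) := by positivity
  have key : -(1/((B:ℝ) - 1)) - -(1/(((2:ℕ):ℝ) - 1)) ≤ 1 := by
    have h8 : (((2:ℕ):ℝ) - 1) = 1 := by norm_num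
    rw [h8]
    linarith
  exact hle.trans key

/-- sum of reciprocals of prime factors -/
lemma sum_primeFactors_le (m : ℕ) (hm : 100 ≤ m) :
    ∑ p ∈ m.primeFactors, 1/(p:ℝ) ≤ Real.log (Real.log (Real.log m)) + 11 := by
  have hm0 : 0 < m := by omega
  have hm0' : (0:ℝ) < m := by exact_mod_cast hm0
  have hm100 : (100:ℝ) ≤ (m:ℝ) := by exact_mod_cast hm
  have hexp4 : Real.exp 4 < 100 := by
    have h := Real.exp_one_lt_d9
    calc Real.exp 4 = (Real.exp 1)^4 := by rw [← Real.exp_nat_mul]; norm_num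
      _ < 2.7182818286^4 := by
          exact pow_lt_pow_left₀ h (Real.exp_pos 1).le (by norm_num)
      _ < 100 := by norm_num
  have hlogm : 4 < Real.log m := (Real.lt_log_iff_exp_lt hm0').mpr (lt_of_lt_of_le hexp4 hm100)
  set K := ⌊Real.log m⌋₊ with hKdef
  have hK1 : (K:ℝ) ≤ Real.log m := Nat.floor_le (by linarith)
  have hK2 : Real.log m < K + 1 := Nat.lt_floor_add_one _
  have hK4 : 4 ≤ K := by
    by_contra hcon
    push_neg at hcon
    have : (K:ℝ) ≤ 3 := by exact_mod_cast Nat.lt_succ_iff.mp hcon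
    linarith
  have hK2' : 2 ≤ K := by omega
  have hKR : (2:ℝ) ≤ (K:ℝ) := by exact_mod_cast hK2'
  classical
  rw [← Finset.sum_filter_add_sum_filter_not m.primeFactors (fun p => p ≤ K) (fun p => 1/(p:ℝ))]
  have hhead : ∑ p ∈ m.primeFactors.filter (fun p => p ≤ K), 1/(p:ℝ)
      ≤ Real.log (Real.log (Real.log m)) + 10 := by
    have hsub : m.primeFactors.filter (fun p => p ≤ K) ⊆ Nat.primesBelow (K+1) := by
      intro p hp
      rw [Finset.mem_filter] at hp
      exact Nat.mem_primesBelow.mpr ⟨by omega, Nat.prime_of_mem_primeFactors hp.1⟩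
    calc ∑ p ∈ m.primeFactors.filter (fun p => p ≤ K), 1/(p:ℝ)
        ≤ ∑ p ∈ Nat.primesBelow (K+1), 1/(p:ℝ) := by
          apply Finset.sum_le_sum_of_subset_of_nonneg hsub
          intro p _ _; positivity
      _ ≤ Real.log (Real.log K) + 10 := mertens2 K hK2'
      _ ≤ Real.log (Real.log (Real.log m)) + 10 := by
          have h1 : 0 < Real.log K := Real.log_pos (by linarith)
          have h2 : Real.log K ≤ Real.log (Real.log m) :=
            Real.log_le_log (by linarith) hK1
          have := Real.log_le_log h1 h2
          linarith
  have htail : ∑ p ∈ m.primeFactors.filter (fun p => ¬ p ≤ K), 1/(p:ℝ) ≤ 1 := by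
    set T := m.primeFactors.filter (fun p => ¬ p ≤ K) with hT
    have hKp : ∀ p ∈ T, ((K:ℝ)+1) ≤ (p:ℝ) := by
      intro p hp
      rw [hT, Finset.mem_filter] at hp
      have : K + 1 ≤ p := by omega
      exact_mod_cast this
    have hK1pos : (0:ℝ) < (K:ℝ)+1 := by linarith
    have hcard : ((K:ℝ)+1)^(T.card) ≤ (m:ℝ) := by
      calc ((K:ℝ)+1)^(T.card) = ∏ _p ∈ T, ((K:ℝ)+1) := by rw [Finset.prod_const]
        _ ≤ ∏ p ∈ T, (p:ℝ) := Finset.prod_le_prod (fun _ _ => by linarith) hKp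
        _ = ((∏ p ∈ T, p : ℕ):ℝ) := by rw [Nat.cast_prod]
        _ ≤ (m:ℝ) := by
            have hd1 : (∏ p ∈ T, p) ∣ ∏ p ∈ m.primeFactors, p :=
              Finset.prod_dvd_prod_of_subset _ _ _ (Finset.filter_subset _ _)
            have hd2 := (hd1.trans (Nat.prod_primeFactors_dvd m))
            exact_mod_cast Nat.le_of_dvd hm0 hd2
    have hlogK1 : 1 ≤ Real.log ((K:ℝ)+1) := by
      rw [Real.le_log_iff_exp_le hK1pos]
      have := Real.exp_one_lt_d9
      linarith
    have htlog : (T.card : ℝ) * Real.log ((K:ℝ)+1) ≤ Real.log m := by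
      have := Real.log_le_log (by positivity) hcard
      rwa [Real.log_pow] at this
    have htcard : (T.card : ℝ) ≤ (K:ℝ) + 1 := by
      nlinarith [htlog, hlogK1, hK2]
    calc ∑ p ∈ T, 1/(p:ℝ) ≤ ∑ _p ∈ T, 1/((K:ℝ)+1) := by
          apply Finset.sum_le_sum
          intro p hp
          have := hKp p hp
          have hp0 : (0:ℝ) < p := by linarith
          rw [div_le_div_iff₀ hp0 hK1pos]
          linarith
      _ = (T.card : ℝ) * (1/((K:ℝ)+1)) := by rw [Finset.sum_const]; simp [nsmul_eq_mul]
      _ ≤ 1 := by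
          rw [mul_one_div, div_le_one hK1pos]
          exact htcard
  linarith

lemma totient_prod_form (m : ℕ) (hm : 0 < m) :
    (m:ℝ) / (Nat.totient m : ℝ)
      = ∏ p ∈ m.primeFactors, (p:ℝ)/((p:ℝ)-1) := by
  have hQ := Nat.totient_eq_mul_prod_factors m
  have hR : (Nat.totient m : ℝ) = m * ∏ p ∈ m.primeFactors, (1 - (p:ℝ)⁻¹) := by
    have := congrArg (fun q : ℚ => (q : ℝ)) hQ
    push_cast at this
    exact_mod_cast this
  have hprod_pos : ∀ p ∈ m.primeFactors, (0:ℝ) < 1 - (p:ℝ)⁻¹ := by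
    intro p hp
    have h2 : (2:ℝ) ≤ (p:ℝ) := by exact_mod_cast (Nat.prime_of_mem_primeFactors hp).two_le
    have : (p:ℝ)⁻¹ ≤ 1/2 := by
      rw [inv_eq_one_div, div_le_div_iff₀ (by linarith) (by norm_num)]
      linarith
    linarith
  have hP : (0:ℝ) < ∏ p ∈ m.primeFactors, (1 - (p:ℝ)⁻¹) := Finset.prod_pos hprod_pos
  have hm' : (0:ℝ) < m := by exact_mod_cast hm
  rw [hR]
  rw [div_mul_eq_div_div, div_self hm'.ne']
  rw [one_div, ← Finset.prod_inv_distrib]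
  apply Finset.prod_congr rfl
  intro p hp
  have h2 : (2:ℝ) ≤ (p:ℝ) := by exact_mod_cast (Nat.prime_of_mem_primeFactors hp).two_le
  have hp0 : (p:ℝ) ≠ 0 := by linarith
  have hp1 : (p:ℝ) - 1 ≠ 0 := by linarith
  field_simp

lemma totient_exp_bound (m : ℕ) (hm : 0 < m) :
    (m:ℝ) / (Nat.totient m : ℝ)
      ≤ Real.exp (1 + ∑ p ∈ m.primeFactors, 1/(p:ℝ)) := by
  rw [totient_prod_form m hm]
  have h1 : ∏ p ∈ m.primeFactors, (p:ℝ)/((p:ℝ)-1)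
      ≤ ∏ p ∈ m.primeFactors, Real.exp (1/((p:ℝ)-1)) := by
    apply Finset.prod_le_prod
    · intro p hp
      have h2 : (2:ℝ) ≤ (p:ℝ) := by exact_mod_cast (Nat.prime_of_mem_primeFactors hp).two_le
      have hp1 : (0:ℝ) < (p:ℝ) - 1 := by linarith
      positivity
    · intro p hp
      have h2 : (2:ℝ) ≤ (p:ℝ) := by exact_mod_cast (Nat.prime_of_mem_primeFactors hp).two_le
      have hp1 : (0:ℝ) < (p:ℝ) - 1 := by linarith
      have : (p:ℝ)/((p:ℝ)-1) = 1/((p:ℝ)-1) + 1 := by field_simp; ring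
      rw [this]
      exact Real.add_one_le_exp _
  rw [← Real.exp_sum] at h1
  apply h1.trans
  rw [Real.exp_le_exp]
  have h2 : ∑ p ∈ m.primeFactors, 1/((p:ℝ)-1)
      = ∑ p ∈ m.primeFactors, (1/(p:ℝ) + 1/((p:ℝ)*((p:ℝ)-1))) := by
    apply Finset.sum_congr rfl
    intro p hp
    have h2 : (2:ℝ) ≤ (p:ℝ) := by exact_mod_cast (Nat.prime_of_mem_primeFactors hp).two_le
    have hp0 : (p:ℝ) ≠ 0 := by linarith
    have hp1 : (p:ℝ) - 1 ≠ 0 := by linarith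
    field_simp
    ring
  rw [h2, Finset.sum_add_distrib]
  have h3 := helperT m.primeFactors (fun p hp => (Nat.prime_of_mem_primeFactors hp).two_le)
  linarith

/-- main totient bound: m/φ(m) ≤ (e^12+145) · log log (10 m) -/
lemma totient_loglog_bound (m : ℕ) (hm : 0 < m) :
    (m:ℝ) / (Nat.totient m : ℝ)
      ≤ (Real.exp 12 + 145) * Real.log (Real.log (10 * (m:ℝ))) := by
  have hm1 : (1:ℝ) ≤ (m:ℝ) := by exact_mod_cast hm
  have hexp2 : Real.exp 2 < 10 := by
    have h := Real.exp_one_lt_d9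
    have : Real.exp 2 = (Real.exp 1)^2 := by rw [← Real.exp_nat_mul]; norm_num
    nlinarith [Real.exp_pos 1]
  have hlog10m : 2 < Real.log (10 * (m:ℝ)) := by
    rw [Real.lt_log_iff_exp_lt (by linarith)]
    nlinarith
  have hloglog_pos : 0 < Real.log (Real.log (10 * (m:ℝ))) :=
    Real.log_pos (by linarith)
  have hlog2 := Real.log_two_gt_d9
  have hll2 : Real.log 2 < Real.log (Real.log (10 * (m:ℝ))) :=
    Real.log_lt_log (by norm_num) (by linarith)
  rcases lt_or_ge m 100 with hsmall | hbig
  · have hφ : (1:ℝ) ≤ (Nat.totient m : ℝ) := by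
      exact_mod_cast Nat.succ_le_of_lt (Nat.totient_pos.mpr hm)
    have h1 : (m:ℝ) / (Nat.totient m : ℝ) ≤ (m:ℝ) :=
      div_le_self (by linarith) hφ
    have h2 : (m:ℝ) < 100 := by exact_mod_cast hsmall
    have h3 : (100:ℝ) ≤ 145 * Real.log (Real.log (10 * (m:ℝ))) := by
      nlinarith
    nlinarith [Real.exp_pos 12, hloglog_pos]
  · have hm100 : (100:ℝ) ≤ (m:ℝ) := by exact_mod_cast hbig
    have hexp4 : Real.exp 4 < 100 := by
      have h := Real.exp_one_lt_d9
      calc Real.exp 4 = (Real.exp 1)^4 := by rw [← Real.exp_nat_mul]; norm_num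
        _ < 2.7182818286^4 := pow_lt_pow_left₀ h (Real.exp_pos 1).le (by norm_num)
        _ < 100 := by norm_num
    have hlogm : 4 < Real.log m :=
      (Real.lt_log_iff_exp_lt (by linarith)).mpr (lt_of_lt_of_le hexp4 hm100)
    have hllm_pos : 0 < Real.log (Real.log m) := Real.log_pos (by linarith)
    have h1 := totient_exp_bound m hm
    have h2 := sum_primeFactors_le m hbig
    have h3 : (m:ℝ) / (Nat.totient m : ℝ)
        ≤ Real.exp (12 + Real.log (Real.log (Real.log m))) := by
      apply h1.trans
      rw [Real.exp_le_exp]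
      linarith
    rw [Real.exp_add, Real.exp_log hllm_pos] at h3
    have h4 : Real.log (Real.log m) ≤ Real.log (Real.log (10 * (m:ℝ))) := by
      apply Real.log_le_log (by linarith)
      apply Real.log_le_log (by linarith)
      linarith
    calc (m:ℝ) / (Nat.totient m : ℝ) ≤ Real.exp 12 * Real.log (Real.log m) := h3
      _ ≤ Real.exp 12 * Real.log (Real.log (10 * (m:ℝ))) := by
          apply mul_le_mul_of_nonneg_left h4 (Real.exp_pos 12).le
      _ ≤ (Real.exp 12 + 145) * Real.log (Real.log (10 * (m:ℝ))) := by
          nlinarith [hloglog_pos]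

/-- products of (1+f) via exp/log -/
lemma hasProd_one_add {ι : Type*} (f : ι → ℝ) (h0 : ∀ i, 0 ≤ f i) (hs : Summable f) :
    HasProd (fun i => 1 + f i) (Real.exp (∑' i, Real.log (1 + f i))) := by
  have hpos : ∀ i, (0:ℝ) < 1 + f i := fun i => by linarith [h0 i]
  have hLsum : Summable (fun i => Real.log (1 + f i)) := by
    apply hs.of_nonneg_of_le
    · intro i
      apply Real.log_nonneg
      linarith [h0 i]
    · intro i
      have := Real.log_le_sub_one_of_pos (hpos i)
      linarith
  have hx : HasSum (fun i => Real.log (1 + f i)) (∑' i, Real.log (1 + f i)) :=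
    hLsum.hasSum
  have h2 : Filter.Tendsto
      (fun s : Finset ι => Real.exp (∑ i ∈ s, Real.log (1 + f i)))
      Filter.atTop (nhds (Real.exp (∑' i, Real.log (1 + f i)))) :=
    (Real.continuous_exp.continuousAt).tendsto.comp hx
  have h3 : (fun s : Finset ι => Real.exp (∑ i ∈ s, Real.log (1 + f i)))
      = fun s : Finset ι => ∏ i ∈ s, (1 + f i) := by
    funext s
    rw [Real.exp_sum]
    exact Finset.prod_congr rfl (fun i _ => Real.exp_log (hpos i))
  rw [h3] at h2
  exact h2

/-- summability of 1/(p(p-1)) over primes -/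
lemma summable_inv_mul_sub_one :
    Summable (fun p : Nat.Primes => 1/((p:ℝ) * ((p:ℝ) - 1))) := by
  have hbase : Summable (fun p : Nat.Primes => 2 * ((p:ℕ):ℝ) ^ (-2:ℝ)) :=
    (Nat.Primes.summable_rpow.mpr (by norm_num)).mul_left 2
  apply hbase.of_nonneg_of_le
  · intro p
    have h2 : (2:ℝ) ≤ ((p:ℕ):ℝ) := by exact_mod_cast p.2.two_le
    have : (0:ℝ) < ((p:ℕ):ℝ) - 1 := by linarith
    positivity
  · intro p
    have h2 : (2:ℝ) ≤ ((p:ℕ):ℝ) := by exact_mod_cast p.2.two_le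
    have hp0 : (0:ℝ) < ((p:ℕ):ℝ) := by linarith
    have h1 : (0:ℝ) < ((p:ℕ):ℝ) - 1 := by linarith
    have hrw : ((p:ℕ):ℝ) ^ (-2:ℝ) = 1/((p:ℕ):ℝ)^2 := by
      rw [show ((-2):ℝ) = -((2:ℕ):ℝ) by norm_num, Real.rpow_neg hp0.le, one_div,
        Real.rpow_natCast]
    rw [hrw, mul_one_div, div_le_div_iff₀ (by positivity) (by positivity)]
    nlinarith

lemma main_aux (m : ℕ) (hm : 0 < m) :
    Multipliable (fun p : Nat.Primes =>
      (1 + (Nat.totient (Nat.gcd m (p : ℕ)) : ℝ) / ((p : ℝ) * ((p : ℝ) - 1)))) ∧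
    (∏' p : Nat.Primes,
      (1 + (Nat.totient (Nat.gcd m (p : ℕ)) : ℝ) / ((p : ℝ) * ((p : ℝ) - 1))))
      ≤ (m:ℝ) / (Nat.totient m : ℝ) * Real.exp 1 := by
  classical
  set a : Nat.Primes → ℝ := fun p =>
    (Nat.totient (Nat.gcd m (p : ℕ)) : ℝ) / ((p : ℝ) * ((p : ℝ) - 1)) with ha
  have hp2 : ∀ p : Nat.Primes, (2:ℝ) ≤ ((p:ℕ):ℝ) := fun p => by exact_mod_cast p.2.two_le
  have hp1 : ∀ p : Nat.Primes, (0:ℝ) < ((p:ℕ):ℝ) - 1 := fun p => by linarith [hp2 p]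
  have hp0 : ∀ p : Nat.Primes, (0:ℝ) < ((p:ℕ):ℝ) := fun p => by linarith [hp2 p]
  have hgcd_dvd : ∀ p : Nat.Primes, (p:ℕ) ∣ m → Nat.gcd m (p:ℕ) = (p:ℕ) := by
    intro p h
    rw [Nat.gcd_comm]
    exact Nat.gcd_eq_left h
  have hgcd_ndvd : ∀ p : Nat.Primes, ¬(p:ℕ) ∣ m → Nat.gcd m (p:ℕ) = 1 := by
    intro p h
    rw [Nat.gcd_comm]
    exact (Nat.Prime.coprime_iff_not_dvd p.2).mpr h
  have hcast : ∀ p : Nat.Primes, (((p:ℕ) - 1 : ℕ) : ℝ) = ((p:ℕ):ℝ) - 1 := by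
    intro p
    have := p.2.two_le
    push_cast [Nat.cast_sub (by omega : 1 ≤ (p:ℕ))]
    ring
  have ha_val : ∀ p : Nat.Primes, a p = if (p:ℕ) ∣ m then 1/((p:ℕ):ℝ)
      else 1/(((p:ℕ):ℝ) * (((p:ℕ):ℝ) - 1)) := by
    intro p
    rw [ha]
    by_cases h : (p:ℕ) ∣ m
    · simp only [h, if_true]
      rw [hgcd_dvd p h, Nat.totient_prime p.2, hcast p]
      have h1 := hp1 p
      have h0 := hp0 p
      field_simp
    · simp only [h, if_false]
      rw [hgcd_ndvd p h, Nat.totient_one]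
      push_cast
      rfl
  have hann : ∀ p : Nat.Primes, 0 ≤ a p := by
    intro p
    rw [ha]
    have h1 := hp1 p
    have h0 := hp0 p
    positivity
  -- the finite set of prime divisors, as a Finset of Nat.Primes
  set S : Finset Nat.Primes := m.primeFactors.subtype Nat.Prime with hS
  have hmemS : ∀ p : Nat.Primes, p ∈ S ↔ (p:ℕ) ∈ m.primeFactors := by
    intro p
    rw [hS]; exact Finset.mem_subtype
  have hnotS : ∀ p : Nat.Primes, p ∉ S → ¬((p:ℕ) ∣ m) := by
    intro p hp hdvd
    exact hp ((hmemS p).mpr (Nat.mem_primeFactors.mpr ⟨p.2, hdvd, hm.ne'⟩))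
  have hinS : ∀ p : Nat.Primes, p ∈ S → (p:ℕ) ∣ m := by
    intro p hp
    exact (Nat.mem_primeFactors.mp ((hmemS p).mp hp)).2.1
  -- summability of a
  have hsum_ind : Summable (fun p : Nat.Primes => if (p:ℕ) ∣ m then 1/((p:ℕ):ℝ) else 0) := by
    apply summable_of_ne_finset_zero (s := S)
    intro p hp
    simp [hnotS p hp]
  have hsum_a : Summable a := by
    apply Summable.of_nonneg_of_le hann _ (hsum_ind.add summable_inv_mul_sub_one)
    intro p
    rw [ha_val p]
    have h1 := hp1 p
    have h0 := hp0 p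
    by_cases h : (p:ℕ) ∣ m
    · simp only [h, if_true]
      have : (0:ℝ) ≤ 1/(((p:ℕ):ℝ) * (((p:ℕ):ℝ) - 1)) := by positivity
      linarith
    · simp only [h, if_false]
      simp
  -- the product formula
  have hProd := hasProd_one_add a hann hsum_a
  constructor
  · exact hProd.multipliable
  rw [hProd.tprod_eq]
  -- b and c
  set b : Nat.Primes → ℝ := fun p =>
    if (p:ℕ) ∣ m then ((p:ℕ):ℝ)/(((p:ℕ):ℝ)-1) else 1 with hb
  set c : Nat.Primes → ℝ := fun p =>
    1 + 1/(((p:ℕ):ℝ) * (((p:ℕ):ℝ)-1)) with hc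
  have hb_pos : ∀ p, 0 < b p := by
    intro p
    rw [hb]
    have h1 := hp1 p
    have h0 := hp0 p
    by_cases h : (p:ℕ) ∣ m <;> simp only [h, if_true, if_false] <;> positivity
  have hc_pos : ∀ p, 0 < c p := by
    intro p
    rw [hc]
    have h1 := hp1 p
    have h0 := hp0 p
    positivity
  have hFbc : ∀ p : Nat.Primes, 1 + a p ≤ b p * c p := by
    intro p
    rw [ha_val p, hb, hc]
    have h1 := hp1 p
    have h0 := hp0 p
    by_cases h : (p:ℕ) ∣ m
    · simp only [h, if_true]
      have h2 := hp2 p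
      have hkey : ((p:ℕ):ℝ)/(((p:ℕ):ℝ)-1) * (1 + 1/(((p:ℕ):ℝ) * (((p:ℕ):ℝ)-1)))
          - (1 + 1/((p:ℕ):ℝ)) = (2*((p:ℕ):ℝ)-1)/(((p:ℕ):ℝ)*((((p:ℕ):ℝ)-1))^2) := by
        field_simp
        ring
      rw [← sub_nonneg, hkey]
      apply div_nonneg (by linarith) (by positivity)
    · simp only [h, if_false]
      rw [one_mul]
  -- summable logs
  have hL_nonneg : ∀ p : Nat.Primes, 0 ≤ Real.log (1 + a p) := by
    intro p
    apply Real.log_nonneg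
    linarith [hann p]
  have hL_le : ∀ p : Nat.Primes, Real.log (1 + a p) ≤ a p := by
    intro p
    have := Real.log_le_sub_one_of_pos (show (0:ℝ) < 1 + a p by linarith [hann p])
    linarith
  have hLsum : Summable (fun p => Real.log (1 + a p)) :=
    hsum_a.of_nonneg_of_le hL_nonneg hL_le
  have hlogb_sum : Summable (fun p => Real.log (b p)) := by
    apply summable_of_ne_finset_zero (s := S)
    intro p hp
    rw [hb]
    simp [hnotS p hp]
  have hlogc_nonneg : ∀ p : Nat.Primes, 0 ≤ Real.log (c p) := by
    intro p
    apply Real.log_nonneg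
    rw [hc]
    have h1 := hp1 p
    have h0 := hp0 p
    have : (0:ℝ) ≤ 1/(((p:ℕ):ℝ) * (((p:ℕ):ℝ)-1)) := by positivity
    linarith
  have hlogc_le : ∀ p : Nat.Primes, Real.log (c p) ≤ 1/(((p:ℕ):ℝ) * (((p:ℕ):ℝ)-1)) := by
    intro p
    have := Real.log_le_sub_one_of_pos (hc_pos p)
    rw [hc] at this ⊢
    linarith
  have hlogc_sum : Summable (fun p => Real.log (c p)) :=
    summable_inv_mul_sub_one.of_nonneg_of_le hlogc_nonneg hlogc_le
  -- compare sums
  have hlog_le : ∀ p : Nat.Primes, Real.log (1 + a p) ≤ Real.log (b p) + Real.log (c p) := by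
    intro p
    rw [← Real.log_mul (hb_pos p).ne' (hc_pos p).ne']
    apply Real.log_le_log (by linarith [hann p]) (hFbc p)
  have htsum_le : ∑' p, Real.log (1 + a p)
      ≤ ∑' p, Real.log (b p) + ∑' p, Real.log (c p) := by
    rw [← Summable.tsum_add hlogb_sum hlogc_sum]
    exact Summable.tsum_le_tsum hlog_le hLsum (hlogb_sum.add hlogc_sum)
  -- evaluate tsum of log b
  have htsum_b : ∑' p, Real.log (b p) = ∑ p ∈ S, Real.log (b p) := by
    apply tsum_eq_sum
    intro p hp
    rw [hb]
    simp [hnotS p hp]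
  have hexp_b : Real.exp (∑' p, Real.log (b p)) = (m:ℝ) / (Nat.totient m : ℝ) := by
    rw [htsum_b, Real.exp_sum]
    have h1 : ∀ p ∈ S, Real.exp (Real.log (b p)) = b p := fun p _ => Real.exp_log (hb_pos p)
    rw [Finset.prod_congr rfl h1]
    have h2 : ∀ p ∈ S, b p = ((p:ℕ):ℝ)/(((p:ℕ):ℝ)-1) := by
      intro p hp
      rw [hb]
      simp [hinS p hp]
    rw [Finset.prod_congr rfl h2]
    have himg2 : S.image (fun p : Nat.Primes => (p:ℕ)) = m.primeFactors := by
      ext n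
      simp only [Finset.mem_image]
      constructor
      · rintro ⟨p, hp, rfl⟩
        exact (hmemS p).mp hp
      · intro hn
        exact ⟨⟨n, Nat.prime_of_mem_primeFactors hn⟩, (hmemS _).mpr hn, rfl⟩
    calc ∏ p ∈ S, ((p:ℕ):ℝ)/(((p:ℕ):ℝ)-1)
        = ∏ n ∈ S.image (fun p : Nat.Primes => (p:ℕ)), (n:ℝ)/((n:ℝ)-1) := by
          exact (Finset.prod_image (f := fun n : ℕ => (n:ℝ)/((n:ℝ)-1)) (fun x _ y _ hxy => Nat.Primes.coe_nat_injective hxy)).symm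
      _ = (m:ℝ) / (Nat.totient m : ℝ) := by
          rw [himg2]
          exact (totient_prod_form m hm).symm
  -- bound tsum of log c
  have htsum_c : ∑' p, Real.log (c p) ≤ 1 := by
    have h1 : ∑' p, Real.log (c p) ≤ ∑' p : Nat.Primes, 1/(((p:ℕ):ℝ) * (((p:ℕ):ℝ)-1)) :=
      Summable.tsum_le_tsum hlogc_le hlogc_sum summable_inv_mul_sub_one
    apply h1.trans
    apply Summable.tsum_le_of_sum_le summable_inv_mul_sub_one
    intro s
    have himg : ∑ p ∈ s, 1/(((p:ℕ):ℝ) * (((p:ℕ):ℝ)-1))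
        = ∑ n ∈ s.image (fun p : Nat.Primes => (p:ℕ)), 1/((n:ℝ) * ((n:ℝ)-1)) := by
      rw [Finset.sum_image]
      intro x _ y _ hxy
      exact Nat.Primes.coe_nat_injective hxy
    rw [himg]
    apply helperT
    intro n hn
    rw [Finset.mem_image] at hn
    obtain ⟨p, _, rfl⟩ := hn
    exact p.2.two_le
  -- final chain
  have hφpos : (0:ℝ) < (Nat.totient m : ℝ) := by
    exact_mod_cast Nat.totient_pos.mpr hm
  have hmφ : (0:ℝ) ≤ (m:ℝ) / (Nat.totient m : ℝ) := by positivity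
  calc Real.exp (∑' p, Real.log (1 + a p))
      ≤ Real.exp (∑' p, Real.log (b p) + ∑' p, Real.log (c p)) := by
        rw [Real.exp_le_exp]; exact htsum_le
    _ = Real.exp (∑' p, Real.log (b p)) * Real.exp (∑' p, Real.log (c p)) := Real.exp_add _ _
    _ ≤ (m:ℝ) / (Nat.totient m : ℝ) * Real.exp 1 := by
        rw [hexp_b]
        apply mul_le_mul_of_nonneg_left _ hmφ
        rw [Real.exp_le_exp]
        exact htsum_c



/-- For every positive integer `m`, the product over all primes `p` of
`1 + φ(gcd(m,p))/(p(p-1))` converges and is `O(m/φ(m))`, hence `O(log log (10m))`,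
with absolute implied constants. -/
theorem stmt_10 : ∃ C : ℝ, 0 < C ∧ ∀ m : ℕ, 0 < m →
    Multipliable (fun p : Nat.Primes =>
      (1 + (Nat.totient (Nat.gcd m (p : ℕ)) : ℝ) / ((p : ℝ) * ((p : ℝ) - 1)))) ∧
    (∏' p : Nat.Primes,
      (1 + (Nat.totient (Nat.gcd m (p : ℕ)) : ℝ) / ((p : ℝ) * ((p : ℝ) - 1))))
      ≤ C * (m : ℝ) / (Nat.totient m : ℝ) ∧
    (∏' p : Nat.Primes,
      (1 + (Nat.totient (Nat.gcd m (p : ℕ)) : ℝ) / ((p : ℝ) * ((p : ℝ) - 1))))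
      ≤ C * Real.log (Real.log (10 * m)) := by
  refine ⟨Real.exp 1 * (Real.exp 12 + 145), by positivity, ?_⟩
  intro m hm
  obtain ⟨hmult, hle⟩ := main_aux m hm
  have hφpos : (0:ℝ) < (Nat.totient m : ℝ) := by exact_mod_cast Nat.totient_pos.mpr hm
  have hm0 : (0:ℝ) ≤ (m:ℝ) := Nat.cast_nonneg m
  refine ⟨hmult, ?_, ?_⟩
  · apply hle.trans
    have heq : Real.exp 1 * (Real.exp 12 + 145) * (m:ℝ) / (Nat.totient m : ℝ)
        = (Real.exp 1 * (Real.exp 12 + 145)) * ((m:ℝ) / (Nat.totient m : ℝ)) := by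
      ring
    rw [heq]
    have hdn : (0:ℝ) ≤ (m:ℝ) / (Nat.totient m : ℝ) := div_nonneg hm0 hφpos.le
    nlinarith [Real.exp_pos 1, Real.exp_pos 12,
      mul_nonneg (mul_nonneg (Real.exp_pos 1).le hdn) (Real.exp_pos 12).le,
      mul_nonneg (Real.exp_pos 1).le hdn]
  · apply hle.trans
    have h := totient_loglog_bound m hm
    calc (m:ℝ)/(Nat.totient m : ℝ) * Real.exp 1
        ≤ ((Real.exp 12 + 145) * Real.log (Real.log (10 * (m:ℝ)))) * Real.exp 1 :=
          mul_le_mul_of_nonneg_right h (Real.exp_pos 1).le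
      _ = Real.exp 1 * (Real.exp 12 + 145) * Real.log (Real.log (10 * (m:ℝ))) := by ring
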